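/- arXiv:1310.5860 — 3 statements merged into one kernel-verified Lean document; each statement's English description precedes it below -/
import Mathlib

section
/- In the group S_∞ of finitary permutations of ℕ, two partial permutations (λ', h') and (λ'', h'') with λ', λ'' ⊆ λ (λ a finite subset of ℕ, h' a permutation supported in λ', h'' supported in λ'') that are conjugate under S_∞ (meaning there is g ∈ S_∞ with gλ' = λ'' and g h' g⁻¹ = h'') are already conjugate under the subgroup S_λ of permutations supported in λ. -/
/-!
Extend the bijection `g : λ' → λ''` to a bijection of `λ` onto itself and then by the identity
outside `λ`; this gives `k ∈ S_λ` agreeing with `g` on `λ'`. Since `k⁻¹ g` fixes `λ'` pointwise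
and `h'` is supported in `λ'`, the two permutations are disjoint, hence commute, so conjugating
`h'` by `k` or by `g` gives the same result.
-/

namespace Equiv.Perm

variable {α : Type*}

theorem exists_eqOn_of_mapsTo_of_subset [DecidableEq α] (g : Perm α) {s u : Finset α}
    (hsu : s ⊆ u) (hg : Set.MapsTo g s u) :
    ∃ k : Perm α, (∀ i ∉ u, k i = i) ∧ Set.EqOn k g s := by
  obtain ⟨e, he⟩ := Set.MapsTo.exists_equiv_extend_of_card_eq (Fintype.card_coe u)
    (s := {x : u | (x : α) ∈ s}) (f := g ∘ Subtype.val) (fun x hx => hg hx)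
    (g.injective.comp Subtype.val_injective).injOn
  refine ⟨ofSubtype e, fun i hi => ofSubtype_apply_of_not_mem e hi, fun x hx => ?_⟩
  rw [ofSubtype_apply_of_mem e (hsu hx)]
  exact he ⟨x, hsu hx⟩ hx

theorem conj_eq_conj_of_eqOn {h k g : Perm α} {s : Set α} (hh : ∀ i ∉ s, h i = i)
    (hkg : Set.EqOn k g s) : k * h * k⁻¹ = g * h * g⁻¹ := by
  have hdisj : Disjoint (k⁻¹ * g) h := fun x => by
    by_cases hx : x ∈ s
    · exact Or.inl (by rw [mul_apply, ← hkg hx]; exact k.symm_apply_apply x)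
    · exact Or.inr (hh x hx)
  calc k * h * k⁻¹ = k * (h * (k⁻¹ * g)) * g⁻¹ := by group
    _ = k * ((k⁻¹ * g) * h) * g⁻¹ := by rw [hdisj.commute.eq]
    _ = g * h * g⁻¹ := by group

end Equiv.Perm

open Equiv.Perm in
theorem stmt2_general (lam lam' lam'' : Finset ℕ) (h' h'' : Equiv.Perm ℕ)
    (hsub' : lam' ⊆ lam) (hsub'' : lam'' ⊆ lam)
    (hsupp' : ∀ i ∉ lam', h' i = i)
    (g : Equiv.Perm ℕ)
    (hgl : lam'.image g = lam'') (hgc : g * h' * g⁻¹ = h'') :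
    ∃ k : Equiv.Perm ℕ, (∀ i ∉ lam, k i = i) ∧
      lam'.image k = lam'' ∧ k * h' * k⁻¹ = h'' := by
  have hg : Set.MapsTo g lam' lam := fun x hx =>
    hsub'' (hgl ▸ Finset.mem_image_of_mem g hx)
  obtain ⟨k, hk_fix, hk_eq⟩ := exists_eqOn_of_mapsTo_of_subset g hsub' hg
  refine ⟨k, hk_fix, ?_, ?_⟩
  · rw [← hgl]
    exact Finset.image_congr hk_eq
  · rw [← hgc]
    exact conj_eq_conj_of_eqOn hsupp' hk_eq

/-- In the group `S_∞` of finitary permutations of `ℕ`, two partial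
permutations `(λ', h')` and `(λ'', h'')` with `λ', λ'' ⊆ λ` (each `h` supported in
its index set) that are conjugate under a finitary permutation `g` of `ℕ`
(`g λ' = λ''` and `g h' g⁻¹ = h''`) are already conjugate under the subgroup `S_λ`
of permutations supported in `λ`. -/
theorem stmt2 (lam lam' lam'' : Finset ℕ) (h' h'' : Equiv.Perm ℕ)
    (hsub' : lam' ⊆ lam) (hsub'' : lam'' ⊆ lam)
    (hsupp' : ∀ i ∉ lam', h' i = i) (hsupp'' : ∀ i ∉ lam'', h'' i = i)
    (g : Equiv.Perm ℕ) (hgfin : {i | g i ≠ i}.Finite)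
    (hgl : lam'.image g = lam'') (hgc : g * h' * g⁻¹ = h'') :
    ∃ k : Equiv.Perm ℕ, (∀ i ∉ lam, k i = i) ∧
      lam'.image k = lam'' ∧ k * h' * k⁻¹ = h'' :=
  stmt2_general lam lam' lam'' h' h'' hsub' hsub'' hsupp' g hgl hgc
end

section
/- The restricted wreath product G = F ≀ S_∞ (with F finite) acting on partial elements satisfies the admissibility condition: if two partial elements (λ', h') and (λ'', h'') with λ', λ'' ⊆ λ are conjugate in G, then they are conjugate in the subgroup G_λ of elements supported in λ. -/
/-!
Conjugating `h'` by `g` only involves the values of `g` on the support `λ'` of `h'`, and `g`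
maps `λ'` injectively onto `λ'' ⊆ λ`. Extending `g|λ'` to a permutation of the finite set `λ`
and keeping the labels of `g` on `λ` gives an element of `G_λ` with the same effect.
-/

/-- Elements of the restricted wreath product `F ≀ S_∞`: a permutation of `ℕ`
together with a labelling `ℕ → F` (finitariness is imposed by hypotheses below). -/
abbrev WreathElt (F : Type*) [Group F] := Equiv.Perm ℕ × (ℕ → F)

/-- Multiplication of `F ≀ S_∞`: `(s'; f')·(s''; f'') = (s's''; i ↦ f'_{s''(i)} · f''_i)`. -/
def wmul {F : Type*} [Group F] (a b : WreathElt F) : WreathElt F :=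
  (a.1 * b.1, fun i => a.2 (b.1 i) * b.2 i)

/-- Inversion in `F ≀ S_∞`. -/
def winv {F : Type*} [Group F] (a : WreathElt F) : WreathElt F :=
  (a.1⁻¹, fun i => (a.2 (a.1⁻¹ i))⁻¹)

theorem Finset.exists_perm_eqOn_of_injOn {α : Type*} [DecidableEq α] {s u : Finset α}
    {f : α → α} (hsu : s ⊆ u) (hfs : Set.MapsTo f s u) (hf : Set.InjOn f s) :
    ∃ k : Equiv.Perm α, (∀ x ∉ u, k x = x) ∧ Set.EqOn k f s := by
  obtain ⟨e, he⟩ := Finset.exists_equiv_extend_of_card_eq (α := u) (t := u) (Fintype.card_coe u)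
    (s := s.subtype (· ∈ u)) (f := fun x => f x)
    (by
      intro y hy
      obtain ⟨x, hx, rfl⟩ := Finset.mem_image.mp hy
      exact hfs (Finset.mem_subtype.mp hx))
    (fun x hx y hy hxy =>
      Subtype.ext (hf (Finset.mem_subtype.mp hx) (Finset.mem_subtype.mp hy) hxy))
  refine ⟨Equiv.Perm.ofSubtype e, fun x hx => Equiv.Perm.ofSubtype_apply_of_not_mem e hx,
    fun x hx => ?_⟩
  rw [Equiv.Perm.ofSubtype_apply_of_mem e (hsu hx)]
  exact he _ (Finset.mem_subtype.mpr hx)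

namespace WreathElt

variable {F : Type*} [Group F]

def SupportedIn (a : WreathElt F) (s : Set ℕ) : Prop :=
  ∀ n, (a.1 n ≠ n ∨ a.2 n ≠ 1) → n ∈ s

namespace SupportedIn

variable {a : WreathElt F} {s : Set ℕ}

theorem fst_apply (ha : a.SupportedIn s) {n : ℕ} (hn : n ∉ s) : a.1 n = n :=
  not_not.mp fun h => hn (ha n (Or.inl h))

theorem snd_apply (ha : a.SupportedIn s) {n : ℕ} (hn : n ∉ s) : a.2 n = 1 :=
  not_not.mp fun h => hn (ha n (Or.inr h))

theorem fst_mapsTo (ha : a.SupportedIn s) : Set.MapsTo a.1 s s := fun n hn => by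
  by_contra h
  rw [a.1.injective (ha.fst_apply h)] at h
  exact h hn

end SupportedIn

theorem conj_fst (g a : WreathElt F) : (wmul (wmul g a) (winv g)).1 = g.1 * a.1 * g.1⁻¹ := rfl

theorem conj_snd_apply (g a : WreathElt F) (i : ℕ) :
    (wmul (wmul g a) (winv g)).2 i =
      g.2 (a.1 (g.1⁻¹ i)) * a.2 (g.1⁻¹ i) * (g.2 (g.1⁻¹ i))⁻¹ := by
  simp [wmul, winv]

theorem conj_eq_of_eqOn {a : WreathElt F} {s : Set ℕ} (ha : a.SupportedIn s) {g k : WreathElt F}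
    (h₁ : Set.EqOn k.1 g.1 s) (h₂ : Set.EqOn k.2 g.2 s) :
    wmul (wmul k a) (winv k) = wmul (wmul g a) (winv g) := by
  have inv_eq : ∀ i, k.1⁻¹ i ∈ s ∨ g.1⁻¹ i ∈ s → k.1⁻¹ i = g.1⁻¹ i := by
    rintro i (hk | hg)
    · exact Equiv.Perm.eq_inv_iff_eq.mpr
        (by rw [← h₁ hk, Equiv.Perm.coe_inv, Equiv.apply_symm_apply])
    · exact (Equiv.Perm.eq_inv_iff_eq.mpr
        (by rw [h₁ hg, Equiv.Perm.coe_inv, Equiv.apply_symm_apply])).symm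
  have inv_cases : ∀ i,
      (k.1⁻¹ i ∉ s ∧ g.1⁻¹ i ∉ s) ∨ (k.1⁻¹ i = g.1⁻¹ i ∧ g.1⁻¹ i ∈ s) := by
    intro i
    by_cases hg : g.1⁻¹ i ∈ s
    · exact .inr ⟨inv_eq i (.inr hg), hg⟩
    · exact .inl ⟨fun hk => hg (inv_eq i (.inl hk) ▸ hk), hg⟩
  refine Prod.ext (Equiv.ext fun i => ?_) (funext fun i => ?_)
  · simp only [conj_fst, Equiv.Perm.mul_apply]
    rcases inv_cases i with ⟨hk, hg⟩ | ⟨heq, hs⟩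
    · rw [ha.fst_apply hk, ha.fst_apply hg]
      simp only [Equiv.Perm.coe_inv, Equiv.apply_symm_apply]
    · rw [heq, h₁ (ha.fst_mapsTo hs)]
  · rw [conj_snd_apply, conj_snd_apply]
    rcases inv_cases i with ⟨hk, hg⟩ | ⟨heq, hs⟩
    · rw [ha.fst_apply hk, ha.fst_apply hg, ha.snd_apply hk, ha.snd_apply hg, mul_one,
        mul_inv_cancel, mul_one, mul_inv_cancel]
    · rw [heq, h₂ hs, h₂ (ha.fst_mapsTo hs)]

end WreathElt

theorem stmt5_general {F : Type*} [Group F]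
    (lam lam' lam'' : Finset ℕ) (hsub' : lam' ⊆ lam) (hsub'' : lam'' ⊆ lam)
    (h' h'' g : WreathElt F)
    (hh' : ∀ n : ℕ, (h'.1 n ≠ n ∨ h'.2 n ≠ 1) → n ∈ lam')
    (hgl : lam'.image g.1 = lam'')
    (hconj : wmul (wmul g h') (winv g) = h'') :
    ∃ k : WreathElt F, (∀ n : ℕ, (k.1 n ≠ n ∨ k.2 n ≠ 1) → n ∈ lam) ∧
      lam'.image k.1 = lam'' ∧ wmul (wmul k h') (winv k) = h'' := by
  have hmaps : Set.MapsTo g.1 lam' lam := fun n hn =>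
    hsub'' (hgl ▸ Finset.mem_image_of_mem g.1 hn)
  obtain ⟨k₁, hk₁, hk₁g⟩ := Finset.exists_perm_eqOn_of_injOn hsub' hmaps g.1.injective.injOn
  let k : WreathElt F := (k₁, fun n => if n ∈ lam then g.2 n else 1)
  refine ⟨k, fun n hn => ?_, ?_, ?_⟩
  · by_contra hnl
    rcases hn with hn | hn
    · exact hn (hk₁ n hnl)
    · exact hn (if_neg hnl)
  · rw [Finset.image_congr hk₁g, hgl]
  · rw [← hconj]
    exact WreathElt.conj_eq_of_eqOn hh' hk₁g fun n hn => if_pos (hsub' hn)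

/-- The restricted wreath product `G = F ≀ S_∞` (with `F` finite)
acting on partial elements satisfies the admissibility condition: if two partial
elements `(λ', h')` and `(λ'', h'')` with `λ', λ'' ⊆ λ` are conjugate in `G`
(by an element `g` of finite support), then they are conjugate by an element of
the subgroup `G_λ` of elements supported in `λ`. -/
theorem stmt5 {F : Type*} [Group F] [Fintype F]
    (lam lam' lam'' : Finset ℕ) (hsub' : lam' ⊆ lam) (hsub'' : lam'' ⊆ lam)
    (h' h'' g : WreathElt F)
    (hh' : ∀ n : ℕ, (h'.1 n ≠ n ∨ h'.2 n ≠ 1) → n ∈ lam')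
    (hh'' : ∀ n : ℕ, (h''.1 n ≠ n ∨ h''.2 n ≠ 1) → n ∈ lam'')
    (hg : {n : ℕ | g.1 n ≠ n ∨ g.2 n ≠ 1}.Finite)
    (hgl : lam'.image g.1 = lam'')
    (hconj : wmul (wmul g h') (winv g) = h'') :
    ∃ k : WreathElt F, (∀ n : ℕ, (k.1 n ≠ n ∨ k.2 n ≠ 1) → n ∈ lam) ∧
      lam'.image k.1 = lam'' ∧ wmul (wmul k h') (winv k) = h'' :=
  stmt5_general lam lam' lam'' hsub' hsub'' h' h'' g hh' hgl hconj
end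

section
/- Let G be a finite group acting on a finite poset Λ (with least element 0 and binary suprema) via order automorphisms, with a G-equivariant monotone family of subgroups G_λ satisfying the admissibility axioms. Then the free k-module A on the set Ω of G-orbits of partial elements, with multiplication induced from (λ',h')(λ'',h'') = (λ'∧λ'', h'h''), is a well-defined associative and commutative k-algebra; commutativity means that the structure constants satisfy P^{ω}_{ω',ω''} = P^{ω}_{ω'',ω'} for all orbits ω, ω', ω'' ∈ Ω. -/
open scoped Classical

/-- An admissible set of data `(Λ, G, η)` in the sense of Ivanov–Kerov /
Alekseevski–Natanzon: a poset `Λ` with least element and binary suprema, a group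
`G` acting on `Λ` by order automorphisms, and a `G`-equivariant monotone family
of finite subgroups `G_λ = η λ` satisfying the admissibility axioms (in
particular axiom 5: partial elements lying below a common `λ` that are conjugate
in `G` are conjugate in `G_λ`, and its consequence that a `G`-conjugacy class
meets each `G_λ` in at most one `G_λ`-class). -/
structure AdmissibleData (G Λ : Type*) [Group G] [PartialOrder Λ] [OrderBot Λ]
    [MulAction G Λ] where
  wedge : Λ → Λ → Λ
  isLUB_wedge : ∀ a b : Λ, IsLUB {a, b} (wedge a b)
  eta : Λ → Subgroup G
  eta_mono : Monotone eta
  eta_bot : eta ⊥ = ⊥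
  smul_le_iff : ∀ (g : G) (a b : Λ), a ≤ b ↔ g • a ≤ g • b
  eta_equivariant : ∀ (g : G) (a : Λ) (x : G), x ∈ eta a ↔ g * x * g⁻¹ ∈ eta (g • a)
  eta_stabilizes : ∀ (a : Λ) (g : G), g ∈ eta a → g • a = a
  eta_finite : ∀ a : Λ, (eta a : Set G).Finite
  pred_finite : ∀ a : Λ, {b : Λ | b ≤ a}.Finite
  conj_cond : ∀ (lam lam' lam'' : Λ) (h' h'' : G), lam' ≤ lam → lam'' ≤ lam →
    h' ∈ eta lam' → h'' ∈ eta lam'' →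
    (∃ g : G, g • lam' = lam'' ∧ g * h' * g⁻¹ = h'') →
    ∃ g ∈ eta lam, g • lam' = lam'' ∧ g * h' * g⁻¹ = h''
  conj_in_sub : ∀ (a : Λ) (x y : G), x ∈ eta a → y ∈ eta a → IsConj x y →
    ∃ g ∈ eta a, g * x * g⁻¹ = y

variable {G Λ : Type*} [Group G] [PartialOrder Λ] [OrderBot Λ] [MulAction G Λ]

/-- Partial elements: pairs `(λ, h)` with `h ∈ G_λ`. -/
abbrev PartialElt (D : AdmissibleData G Λ) : Type _ := {p : Λ × G // p.2 ∈ D.eta p.1}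

/-- Conjugation of partial elements: `g • (λ, h) = (g•λ, g h g⁻¹)`; two partial
elements are equivalent iff they lie in the same `G`-orbit (conjugacy class). -/
def orbSetoid (D : AdmissibleData G Λ) : Setoid (PartialElt D) where
  r p q := ∃ g : G, g • p.val.1 = q.val.1 ∧ g * p.val.2 * g⁻¹ = q.val.2
  iseqv := by
    constructor
    · intro p; exact ⟨1, by simp, by simp⟩
    · rintro p q ⟨g, h1, h2⟩
      exact ⟨g⁻¹, by rw [← h1, inv_smul_smul], by rw [← h2]; group⟩
    · rintro p q r ⟨g, h1, h2⟩ ⟨g', h1', h2'⟩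
      exact ⟨g' * g, by rw [mul_smul, h1, h1'], by rw [← h2', ← h2]; group⟩

/-- Conjugacy classes of partial elements (the index set `Ω` of the basis of the
generalized Ivanov–Kerov algebra). -/
abbrev Orb (D : AdmissibleData G Λ) : Type _ := Quotient (orbSetoid D)

/-- Structure constant of the generalized IK-algebra: the number of pairs of
partial elements in the classes `ω', ω''` whose product is exactly the given
partial element `(λ, h)`. -/
noncomputable def Pconst (D : AdmissibleData G Λ) (ω' ω'' : Orb D) (lam : Λ) (h : G) : ℕ :=
  Nat.card {pq : PartialElt D × PartialElt D //
    Quotient.mk (orbSetoid D) pq.1 = ω' ∧ Quotient.mk (orbSetoid D) pq.2 = ω'' ∧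
    D.wedge pq.1.val.1 pq.2.val.1 = lam ∧ pq.1.val.2 * pq.2.val.2 = h}

/-- `ξ(l', c; l)` computed from representatives: the number of `μ` in the
`G`-orbit of `lam'` with `μ ⪯ lam` and `h ∈ G_μ`. -/
noncomputable def xiConst (D : AdmissibleData G Λ) (lam' : Λ) (h : G) (lam : Λ) : ℕ :=
  Nat.card {μ : Λ // (∃ g : G, g • lam' = μ) ∧ μ ≤ lam ∧ h ∈ D.eta μ}

/-- Structure constant `S^{c(λ)}_{c'(λ), c''(λ)}` of the center `Z(k[G_λ])`: the
number of factorizations `h = a·b` inside `G_λ` with `a` conjugate (in `G`) to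
`x'` and `b` conjugate to `x''`. -/
noncomputable def Sconst (D : AdmissibleData G Λ) (x' x'' : G) (lam : Λ) (h : G) : ℕ :=
  Nat.card {ab : G × G // ab.1 ∈ D.eta lam ∧ ab.2 ∈ D.eta lam ∧
    IsConj x' ab.1 ∧ IsConj x'' ab.2 ∧ ab.1 * ab.2 = h}

/-!
Partial elements form a monoid under `(λ', h') * (λ'', h'') = (λ' ∧ λ'', h' h'')`, on which `G`
acts by monoid automorphisms through `g • (λ, h) = (g • λ, g h g⁻¹)`; the structure constants
count factorizations of a partial element into factors from two given orbits. Since the action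
permutes such factorizations, the counts only depend on the orbit of the product. Associativity
follows by counting the triples `(p, q, r)` with prescribed product `p * q * r` in two ways,
grouping them by the orbit of `p * q` or of `q * r`. Commutativity comes from the twisted
commutation rule `p * q = h • q * p` for `p = (λ, h)`: the element `h ∈ G_λ` fixes `λ` and hence
`λ ∧ μ`, because `G_λ ≤ G_{λ ∧ μ}`. So `(p, q) ↦ (h • q, p)` is a bijection between factorizations
with the orbits of the factors swapped.
-/

section OrbitStructureConstants

variable {G M : Type*} [Group G]

-- `mulCount s a b (· = m)` is the coefficient of `m` in the product of the orbit sums `e_a * e_b`;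
-- a general predicate `P` also covers targets `(λ, h)` with `h ∉ G_λ`, where `Pconst` is zero.
noncomputable def mulCount [Mul M] (s : Setoid M) (a b : Quotient s) (P : M → Prop) : ℕ :=
  Nat.card {pq : M × M // Quotient.mk s pq.1 = a ∧ Quotient.mk s pq.2 = b ∧ P (pq.1 * pq.2)}

lemma card_eq_sum_card_rel {α : Type*} [Finite α] {s : Setoid M} {T : Finset M}
    (hT : ∀ p, ∃! t, t ∈ T ∧ s.r p t) (f : α → M) :
    Nat.card α = ∑ t ∈ T, Nat.card {x // s.r (f x) t} := by
  choose rep hrep hunique using hT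
  let r : α → T := fun x => ⟨rep (f x), (hrep (f x)).1⟩
  calc Nat.card α = Nat.card (Σ t : T, {x // r x = t}) :=
        Nat.card_congr (Equiv.sigmaFiberEquiv r).symm
    _ = ∑ t : T, Nat.card {x // r x = t} := Nat.card_sigma
    _ = ∑ t ∈ T, Nat.card {x // s.r (f x) t} := by
      rw [← Finset.sum_coe_sort T]
      refine Finset.sum_congr rfl fun t _ => Nat.card_congr (Equiv.subtypeEquivRight fun x => ?_)
      rw [Subtype.ext_iff]
      exact ⟨fun h => h ▸ (hrep (f x)).2, fun h => (hunique (f x) t ⟨t.2, h⟩).symm⟩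

section Action

/- The lemmas below take a setoid `s` equal to the orbit relation rather than `orbitRel G M`
itself, so that they apply to `orbSetoid D`, whose quotient is a different type. -/
variable [MulAction G M] {s : Setoid M}

lemma mk_smul_of_eq_orbitRel (hs : s = MulAction.orbitRel G M) (g : G) (p : M) :
    Quotient.mk s (g • p) = Quotient.mk s p := by
  subst hs
  exact Quotient.sound (MulAction.mem_orbit p g)

theorem mulCount_comm [Mul M] (hs : s = MulAction.orbitRel G M) (τ : M → G)
    (hτ : ∀ p q, p * q = τ p • q * p) (a b : Quotient s) (P : M → Prop) :
    mulCount s a b P = mulCount s b a P :=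
  Nat.card_congr
    { toFun x := ⟨(τ x.1.1 • x.1.2, x.1.1),
        by rw [mk_smul_of_eq_orbitRel hs]; exact x.2.2.1, x.2.1, by rw [← hτ]; exact x.2.2.2⟩
      invFun y := ⟨(y.1.2, (τ y.1.2)⁻¹ • y.1.1), y.2.2.1,
        by rw [mk_smul_of_eq_orbitRel hs]; exact y.2.1, by rw [hτ, smul_inv_smul]; exact y.2.2.2⟩
      left_inv x := by simp
      right_inv y := by simp }

end Action

variable [Monoid M] [MulDistribMulAction G M] {s : Setoid M}

lemma mulCount_smul (hs : s = MulAction.orbitRel G M) (g : G) (a b : Quotient s) (P : M → Prop) :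
    mulCount s a b (fun m => P (g • m)) = mulCount s a b P :=
  Nat.card_congr <| (Equiv.prodCongr (MulAction.toPerm g) (MulAction.toPerm g)).subtypeEquiv
    fun pq => by simp [mk_smul_of_eq_orbitRel hs, smul_mul']

lemma mulCount_eq_of_rel (hs : s = MulAction.orbitRel G M) (a b : Quotient s) {m n : M}
    (hmn : s.r m n) : mulCount s a b (· = m) = mulCount s a b (· = n) := by
  subst hs
  obtain ⟨g, rfl⟩ := hmn
  rw [← mulCount_smul rfl g]
  simp only [smul_left_cancel_iff]

variable [Finite M]

lemma card_mul_rel_eq_mulCount_mul (hs : s = MulAction.orbitRel G M) {Y : Type*} [Finite Y]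
    (a b : Quotient s) (t : M) (Q : M → Y → Prop) :
    Nat.card {x : (M × M) × Y // Quotient.mk s x.1.1 = a ∧ Quotient.mk s x.1.2 = b ∧
      s.r (x.1.1 * x.1.2) t ∧ Q (x.1.1 * x.1.2) x.2} =
    mulCount s a b (· = t) * Nat.card {y : M × Y // s.r y.1 t ∧ Q y.1 y.2} := by
  have := Fintype.ofFinite {y : M × Y // s.r y.1 t ∧ Q y.1 y.2}
  let e : {x : (M × M) × Y // Quotient.mk s x.1.1 = a ∧ Quotient.mk s x.1.2 = b ∧
        s.r (x.1.1 * x.1.2) t ∧ Q (x.1.1 * x.1.2) x.2} ≃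
      Σ y : {y : M × Y // s.r y.1 t ∧ Q y.1 y.2},
        {pq : M × M // Quotient.mk s pq.1 = a ∧ Quotient.mk s pq.2 = b ∧ pq.1 * pq.2 = y.1.1} :=
    { toFun x := ⟨⟨(x.1.1.1 * x.1.1.2, x.1.2), x.2.2.2⟩, x.1.1, x.2.1, x.2.2.1, rfl⟩
      invFun y := ⟨(y.2.1, y.1.1.2), y.2.2.1, y.2.2.2.1, by rw [y.2.2.2.2]; exact y.1.2⟩
      left_inv x := rfl
      right_inv := by
        rintro ⟨⟨⟨u, z⟩, hy⟩, pq, ha, hb, hu⟩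
        obtain rfl : pq.1 * pq.2 = u := hu
        rfl }
  rw [Nat.card_congr e, Nat.card_sigma, Nat.card_eq_fintype_card, mul_comm, ← smul_eq_mul,
    ← Finset.card_univ, ← Finset.sum_const]
  exact Finset.sum_congr rfl fun y _ => mulCount_eq_of_rel hs a b y.2.1

lemma card_eq_sum_mulCount_mul (hs : s = MulAction.orbitRel G M) {T : Finset M}
    (hT : ∀ p, ∃! t, t ∈ T ∧ s.r p t) {Y : Type*} [Finite Y]
    (a b : Quotient s) (Q : M → Y → Prop) :
    Nat.card {x : (M × M) × Y // Quotient.mk s x.1.1 = a ∧ Quotient.mk s x.1.2 = b ∧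
      Q (x.1.1 * x.1.2) x.2} =
    ∑ t ∈ T, mulCount s a b (· = t) * Nat.card {y : M × Y // s.r y.1 t ∧ Q y.1 y.2} := by
  rw [card_eq_sum_card_rel hT fun x => x.1.1.1 * x.1.1.2]
  refine Finset.sum_congr rfl fun t _ => ?_
  rw [← card_mul_rel_eq_mulCount_mul hs]
  exact Nat.card_congr <|
    (Equiv.subtypeSubtypeEquivSubtypeInter _ fun x : (M × M) × Y => s.r (x.1.1 * x.1.2) t).trans
      (Equiv.subtypeEquivRight fun x => by tauto)

theorem sum_mulCount_mul_mulCount_assoc (hs : s = MulAction.orbitRel G M) {T : Finset M}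
    (hT : ∀ p, ∃! t, t ∈ T ∧ s.r p t) (a b c : Quotient s) (P : M → Prop) :
    ∑ t ∈ T, mulCount s a b (· = t) * mulCount s (Quotient.mk s t) c P =
      ∑ t ∈ T, mulCount s b c (· = t) * mulCount s a (Quotient.mk s t) P := by
  have hL : ∀ t, mulCount s (Quotient.mk s t) c P =
      Nat.card {y : M × M // s.r y.1 t ∧ (Quotient.mk s y.2 = c ∧ P (y.1 * y.2))} := fun t =>
    Nat.card_congr <| Equiv.subtypeEquivRight fun y => by rw [Quotient.eq]
  have hR : ∀ t, mulCount s a (Quotient.mk s t) P =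
      Nat.card {y : M × M // s.r y.1 t ∧ (Quotient.mk s y.2 = a ∧ P (y.2 * y.1))} := fun t =>
    Nat.card_congr <| (Equiv.prodComm M M).subtypeEquiv fun y => by simp [Quotient.eq]; tauto
  simp_rw [hL, hR]
  rw [← card_eq_sum_mulCount_mul hs hT a b fun u r => Quotient.mk s r = c ∧ P (u * r),
    ← card_eq_sum_mulCount_mul hs hT b c fun u p => Quotient.mk s p = a ∧ P (p * u)]
  exact Nat.card_congr <| ((Equiv.prodAssoc M M M).trans (Equiv.prodComm _ _)).subtypeEquiv
    fun x => by simp [mul_assoc]; tauto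

end OrbitStructureConstants

namespace AdmissibleData

variable (D : AdmissibleData G Λ)

abbrev semilatticeSup : SemilatticeSup Λ where
  sup := D.wedge
  le_sup_left a b := (D.isLUB_wedge a b).1 (by simp)
  le_sup_right a b := (D.isLUB_wedge a b).1 (by simp)
  sup_le a b c hac hbc := (D.isLUB_wedge a b).2 (by rintro x (rfl | rfl) <;> assumption)

lemma wedge_comm (a b : Λ) : D.wedge a b = D.wedge b a :=
  @sup_comm _ D.semilatticeSup a b

lemma wedge_assoc (a b c : Λ) : D.wedge (D.wedge a b) c = D.wedge a (D.wedge b c) :=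
  @sup_assoc _ D.semilatticeSup a b c

lemma bot_wedge (a : Λ) : D.wedge ⊥ a = a :=
  @bot_sup_eq _ D.semilatticeSup _ a

lemma wedge_bot (a : Λ) : D.wedge a ⊥ = a :=
  @sup_bot_eq _ D.semilatticeSup _ a

lemma le_wedge_left (a b : Λ) : a ≤ D.wedge a b :=
  @le_sup_left _ D.semilatticeSup a b

lemma le_wedge_right (a b : Λ) : b ≤ D.wedge a b :=
  @le_sup_right _ D.semilatticeSup a b

def smulOrderIso (g : G) : Λ ≃o Λ where
  toEquiv := MulAction.toPerm g
  map_rel_iff' := (D.smul_le_iff g _ _).symm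

lemma smul_wedge (g : G) (a b : Λ) : g • D.wedge a b = D.wedge (g • a) (g • b) :=
  @OrderIso.map_sup _ _ D.semilatticeSup D.semilatticeSup (D.smulOrderIso g) a b

lemma smul_bot (D : AdmissibleData G Λ) (g : G) : g • (⊥ : Λ) = ⊥ :=
  (D.smulOrderIso g).map_bot

instance : Mul (PartialElt D) where
  mul p q := ⟨(D.wedge p.val.1 q.val.1, p.val.2 * q.val.2),
    mul_mem (D.eta_mono (D.le_wedge_left _ _) p.prop) (D.eta_mono (D.le_wedge_right _ _) q.prop)⟩

instance : SMul G (PartialElt D) where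
  smul g p := ⟨(g • p.val.1, g * p.val.2 * g⁻¹), (D.eta_equivariant g p.val.1 p.val.2).1 p.prop⟩

@[simp] lemma val_mul (p q : PartialElt D) :
    (p * q).val = (D.wedge p.val.1 q.val.1, p.val.2 * q.val.2) := rfl

@[simp] lemma val_smul (g : G) (p : PartialElt D) :
    (g • p).val = (g • p.val.1, g * p.val.2 * g⁻¹) := rfl

instance : Monoid (PartialElt D) where
  one := ⟨(⊥, 1), one_mem _⟩
  mul_assoc p q r := Subtype.ext (Prod.ext (D.wedge_assoc _ _ _) (mul_assoc _ _ _))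
  one_mul p := Subtype.ext (Prod.ext (D.bot_wedge _) (one_mul _))
  mul_one p := Subtype.ext (Prod.ext (D.wedge_bot _) (mul_one _))

@[simp] lemma val_one : (1 : PartialElt D).val = (⊥, 1) := rfl

instance : MulDistribMulAction G (PartialElt D) where
  one_smul p := Subtype.ext (by simp)
  mul_smul g g' p := Subtype.ext (by simp [mul_smul, mul_assoc])
  smul_mul g p q := Subtype.ext (by simp [D.smul_wedge, mul_assoc])
  smul_one g := Subtype.ext (by simp [D.smul_bot])

lemma orbSetoid_eq : orbSetoid D = MulAction.orbitRel G (PartialElt D) := by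
  ext p q
  rw [MulAction.orbitRel_apply, MulAction.mem_orbit_iff, ← (orbSetoid D).comm']
  simp only [Subtype.ext_iff, Prod.ext_iff, val_smul]
  rfl

lemma mul_eq_smul_mul (p q : PartialElt D) : p * q = p.val.2 • q * p := by
  obtain ⟨⟨a, h⟩, hh⟩ := p
  have ha : h • a = a := D.eta_stabilizes _ _ hh
  have hb : h • D.wedge a q.val.1 = D.wedge a q.val.1 :=
    D.eta_stabilizes _ _ (D.eta_mono (D.le_wedge_left _ _) hh)
  refine Subtype.ext (Prod.ext ?_ (by simp [mul_assoc]))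
  calc D.wedge a q.val.1 = h • D.wedge a q.val.1 := hb.symm
    _ = D.wedge (h • q.val.1) a := by rw [D.smul_wedge, ha, D.wedge_comm]

instance [Finite Λ] : Finite (PartialElt D) :=
  have := fun a => (D.eta_finite a).to_subtype
  .of_equiv _ (Equiv.subtypeProdEquivSigmaSubtype (fun a g => g ∈ D.eta a)).symm

lemma Pconst_eq_mulCount (ω' ω'' : Orb D) (lam : Λ) (h : G) :
    Pconst D ω' ω'' lam h = mulCount (orbSetoid D) ω' ω'' (fun m => m.val.1 = lam ∧ m.val.2 = h) :=
  rfl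

lemma Pconst_eq_mulCount_eq (ω' ω'' : Orb D) (p : PartialElt D) :
    Pconst D ω' ω'' p.val.1 p.val.2 = mulCount (orbSetoid D) ω' ω'' (· = p) :=
  Nat.card_congr <| Equiv.subtypeEquivRight fun _ => by simp [Subtype.ext_iff, Prod.ext_iff]

end AdmissibleData

theorem stmt10_general [Fintype Λ]
    (D : AdmissibleData G Λ) :
    -- well-definedness: independence of the representative of the target class
    (∀ (ω' ω'' : Orb D) (p q : PartialElt D), (orbSetoid D).r p q →
      Pconst D ω' ω'' p.val.1 p.val.2 = Pconst D ω' ω'' q.val.1 q.val.2) ∧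
    -- commutativity: P^{ω}_{ω',ω''} = P^{ω}_{ω'',ω'}
    (∀ (ω' ω'' : Orb D) (lam : Λ) (h : G),
      Pconst D ω' ω'' lam h = Pconst D ω'' ω' lam h) ∧
    -- associativity of the induced multiplication
    (∀ T : Finset (PartialElt D),
      (∀ p : PartialElt D, ∃! t, t ∈ T ∧ (orbSetoid D).r p t) →
      ∀ (ω' ω'' ω''' : Orb D) (lam : Λ) (h : G),
        ∑ t ∈ T, Pconst D ω' ω'' t.val.1 t.val.2 *
            Pconst D (Quotient.mk (orbSetoid D) t) ω''' lam h =
        ∑ t ∈ T, Pconst D ω'' ω''' t.val.1 t.val.2 *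
            Pconst D ω' (Quotient.mk (orbSetoid D) t) lam h) := by
  have hs := D.orbSetoid_eq
  refine ⟨fun ω' ω'' p q hpq => ?_, fun ω' ω'' lam h => ?_, fun T hT ω' ω'' ω''' lam h => ?_⟩
  · simp only [D.Pconst_eq_mulCount_eq]
    exact mulCount_eq_of_rel hs ω' ω'' hpq
  · simp only [D.Pconst_eq_mulCount]
    exact mulCount_comm hs _ D.mul_eq_smul_mul ω' ω'' _
  · simp only [D.Pconst_eq_mulCount_eq, D.Pconst_eq_mulCount]
    exact sum_mulCount_mul_mulCount_assoc hs hT ω' ω'' ω''' _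

/-- For a finite group `G` acting on a finite poset `Λ` with an
admissible family of subgroups, the free `k`-module on the set `Ω` of conjugacy
classes of partial elements, with multiplication induced from
`(λ',h')(λ'',h'') = (λ'∧λ'', h'h'')`, is a well-defined associative commutative
`k`-algebra: the structure constants `P` are independent of the chosen
representative, symmetric in the two lower indices (commutativity), and satisfy
the associativity identity (summation over a transversal `T` of the conjugacy
classes of partial elements). -/
theorem stmt10 {k : Type*} [Field k] [Fintype G] [Fintype Λ]
    (D : AdmissibleData G Λ) :
    -- well-definedness: independence of the representative of the target class
    (∀ (ω' ω'' : Orb D) (p q : PartialElt D), (orbSetoid D).r p q →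
      Pconst D ω' ω'' p.val.1 p.val.2 = Pconst D ω' ω'' q.val.1 q.val.2) ∧
    -- commutativity: P^{ω}_{ω',ω''} = P^{ω}_{ω'',ω'}
    (∀ (ω' ω'' : Orb D) (lam : Λ) (h : G),
      Pconst D ω' ω'' lam h = Pconst D ω'' ω' lam h) ∧
    -- associativity of the induced multiplication
    (∀ T : Finset (PartialElt D),
      (∀ p : PartialElt D, ∃! t, t ∈ T ∧ (orbSetoid D).r p t) →
      ∀ (ω' ω'' ω''' : Orb D) (lam : Λ) (h : G),
        ∑ t ∈ T, Pconst D ω' ω'' t.val.1 t.val.2 *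
            Pconst D (Quotient.mk (orbSetoid D) t) ω''' lam h =
        ∑ t ∈ T, Pconst D ω'' ω''' t.val.1 t.val.2 *
            Pconst D ω' (Quotient.mk (orbSetoid D) t) lam h) :=
  stmt10_general D
end
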